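/- Let L = Φ - (ΦP_α + P_α^TΦ)/2 where P_α = (1-α)I + αP, P is row-stochastic with positive stationary distribution π and Φ = diag(π). Then L is symmetric positive semidefinite and L·1 = 0. -/
import Mathlib


open Matrix

/-- The hypergraph Laplacian `L = Φ - (ΦP_α + P_αᵀΦ)/2` is symmetric positive
semidefinite and satisfies `L·1 = 0`. -/
theorem hypergraph_laplacian_psd {n : ℕ} (P : Matrix (Fin n) (Fin n) ℝ)
    (hP_nonneg : ∀ i j, 0 ≤ P i j) (hP_rowsum : ∀ i, ∑ j, P i j = 1)
    (π : Fin n → ℝ) (hπ_pos : ∀ i, 0 < π i) (hπ_sum : ∑ i, π i = 1)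
    (hπ_stat : π ᵥ* P = π) (α : ℝ) (hα : 0 < α) (hα1 : α < 1) :
    let Φ : Matrix (Fin n) (Fin n) ℝ := Matrix.diagonal π
    let Pα : Matrix (Fin n) (Fin n) ℝ := (1 - α) • (1 : Matrix (Fin n) (Fin n) ℝ) + α • P
    let L : Matrix (Fin n) (Fin n) ℝ := Φ - (2 : ℝ)⁻¹ • (Φ * Pα + Pαᵀ * Φ)
    L.IsSymm ∧ (∀ x : Fin n → ℝ, 0 ≤ x ⬝ᵥ (L *ᵥ x)) ∧ L *ᵥ (fun _ => 1) = 0 := by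
  intro Φ Pα L
  set Q : Fin n → Fin n → ℝ :=
    fun i j => π i * ((1 - α) * (if i = j then (1:ℝ) else 0) + α * P i j) with hQ
  have hLij : ∀ i j, L i j = (if i = j then π i else 0) - 2⁻¹ * (Q i j + Q j i) := by
    intro i j
    simp only [L, Φ, Pα, hQ, Matrix.sub_apply, Matrix.smul_apply, Matrix.add_apply,
      Matrix.diagonal_apply, Matrix.diagonal_mul, Matrix.mul_diagonal,
      Matrix.transpose_apply, Matrix.one_apply, smul_eq_mul]
    by_cases h : i = j <;> simp [h] <;> ring
  have hQnn : ∀ i j, 0 ≤ Q i j := by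
    intro i j
    apply mul_nonneg (hπ_pos i).le
    apply add_nonneg
    · apply mul_nonneg (by linarith)
      split <;> norm_num
    · exact mul_nonneg hα.le (hP_nonneg i j)
  have hQrow : ∀ i, ∑ j, Q i j = π i := by
    intro i
    simp only [hQ]
    rw [← Finset.mul_sum]
    have h1 : ∑ j, ((1 - α) * (if i = j then (1:ℝ) else 0) + α * P i j)
        = (1 - α) * 1 + α * 1 := by
      rw [Finset.sum_add_distrib, ← Finset.mul_sum, ← Finset.mul_sum, hP_rowsum i]
      simp
    rw [h1]; ring
  have hQcol : ∀ j, ∑ i, Q i j = π j := by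
    intro j
    have hst : ∑ i, π i * P i j = π j := by
      have := congrFun hπ_stat j
      simpa [Matrix.vecMul, dotProduct] using this
    have h1 : ∑ i, π i * ((1 - α) * (if i = j then (1:ℝ) else 0))
        = (1 - α) * π j := by
      simp [mul_ite, mul_comm, Finset.sum_ite_eq']
    have h2 : ∑ i, π i * (α * P i j) = α * π j := by
      rw [show (∑ i, π i * (α * P i j)) = α * ∑ i, π i * P i j by
        rw [Finset.mul_sum]; exact Finset.sum_congr rfl fun i _ => by ring, hst]
    simp only [hQ, mul_add, Finset.sum_add_distrib, h1, h2]
    ring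
  have hform : ∀ x : Fin n → ℝ,
      x ⬝ᵥ (L *ᵥ x) = 2⁻¹ * ∑ i, ∑ j, Q i j * (x i - x j) ^ 2 := by
    intro x
    have lhs : x ⬝ᵥ (L *ᵥ x)
        = (∑ i, π i * x i ^ 2) - ∑ i, ∑ j, Q i j * (x i * x j) := by
      have e1 : x ⬝ᵥ (L *ᵥ x) = ∑ i, ∑ j, x i * (L i j * x j) := by
        simp [dotProduct, Matrix.mulVec, Finset.mul_sum]
      rw [e1]
      have e2 : ∀ i j, x i * (L i j * x j)
          = (if i = j then π i * x i ^ 2 else 0)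
            - (2⁻¹ * (Q i j * (x i * x j)) + 2⁻¹ * (Q j i * (x i * x j))) := by
        intro i j
        rw [hLij]
        by_cases h : i = j <;> simp [h] <;> ring
      simp only [e2, Finset.sum_sub_distrib, Finset.sum_add_distrib]
      have e3 : ∑ i, ∑ j, (if i = j then π i * x i ^ 2 else 0) = ∑ i, π i * x i ^ 2 := by
        simp
      have e4 : ∑ i, ∑ j, 2⁻¹ * (Q j i * (x i * x j))
          = ∑ i, ∑ j, 2⁻¹ * (Q i j * (x i * x j)) := by
        rw [Finset.sum_comm]
        exact Finset.sum_congr rfl fun i _ => Finset.sum_congr rfl fun j _ => by ring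
      rw [e3, e4, ← Finset.sum_add_distrib]
      congr 1
      rw [show (∑ i, ∑ j, Q i j * (x i * x j))
        = ∑ i, (∑ j, 2⁻¹ * (Q i j * (x i * x j)) + ∑ j, 2⁻¹ * (Q i j * (x i * x j)))
        from Finset.sum_congr rfl fun i _ => by
          rw [← Finset.sum_add_distrib]
          exact Finset.sum_congr rfl fun j _ => by ring]
    have rhs : 2⁻¹ * (∑ i, ∑ j, Q i j * (x i - x j) ^ 2)
        = (∑ i, π i * x i ^ 2) - ∑ i, ∑ j, Q i j * (x i * x j) := by
      have e5 : ∀ i j, Q i j * (x i - x j) ^ 2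
          = Q i j * x i ^ 2 + Q i j * x j ^ 2 - 2 * (Q i j * (x i * x j)) := by
        intro i j; ring
      simp only [e5, Finset.sum_sub_distrib, Finset.sum_add_distrib]
      have e6 : ∑ i, ∑ j, Q i j * x i ^ 2 = ∑ i, π i * x i ^ 2 := by
        refine Finset.sum_congr rfl fun i _ => ?_
        rw [← Finset.sum_mul, hQrow]
      have e7 : ∑ i, ∑ j, Q i j * x j ^ 2 = ∑ i, π i * x i ^ 2 := by
        rw [Finset.sum_comm]
        refine Finset.sum_congr rfl fun j _ => ?_
        rw [← Finset.sum_mul, hQcol]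
      have e8 : ∑ i, ∑ j, 2 * (Q i j * (x i * x j))
          = 2 * ∑ i, ∑ j, Q i j * (x i * x j) := by
        simp [Finset.mul_sum]
      rw [e6, e7, e8]; ring
    rw [lhs, rhs]
  refine ⟨?_, ?_, ?_⟩
  · ext i j
    rw [Matrix.transpose_apply, hLij, hLij]
    by_cases h : i = j <;> simp [h, eq_comm] <;> ring
  · intro x
    rw [hform x]
    apply mul_nonneg (by norm_num)
    apply Finset.sum_nonneg; intro i _
    apply Finset.sum_nonneg; intro j _
    exact mul_nonneg (hQnn i j) (sq_nonneg _)
  · funext i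
    have : (L *ᵥ fun _ => (1:ℝ)) i = ∑ j, L i j := by
      simp [Matrix.mulVec, dotProduct]
    rw [this]
    simp only [hLij, Finset.sum_sub_distrib, ← Finset.mul_sum, Finset.sum_add_distrib,
      hQrow, hQcol]
    simp
    ring
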